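/- arXiv:1510.01167 — 9 statements merged into one kernel-verified Lean document; each statement's English description precedes it below -/
import Mathlib

section
/- Let M_q(z) be the ordinary generating function of Motzkin trees with exactly q unary nodes, counted by total number of nodes. Then M_0(z) = (1 - sqrt(1-4z^2))/(2z), and for q ≥ 1, M_q(z) = (z·M_{q-1}(z) + z·∑_{ℓ=1}^{q-1} M_ℓ(z)·M_{q-ℓ}(z)) / (1 - 2z·M_0(z)). -/
/-!
Splitting a tree at its root (a leaf, a unary node over a tree, or a binary node over two
trees) gives `M_q = z [q = 0] + z M_{q-1} + z ∑_{k+l=q} M_k M_l`. For `q = 0` this says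
`z M_0² - M_0 + z = 0`, so `S = 1 - 2 z M_0` squares to `1 - 4 z²`; for `q ≥ 1` the two
terms of the convolution containing `M_q` move to the left and produce the factor `1 - 2 z M_0`.
-/

open PowerSeries

inductive MotzkinTree : Type
  | leaf : MotzkinTree
  | unary : MotzkinTree → MotzkinTree
  | binary : MotzkinTree → MotzkinTree → MotzkinTree

namespace MotzkinTree

def size : MotzkinTree → ℕ
  | leaf => 1
  | unary t => 1 + t.size
  | binary l r => 1 + l.size + r.size

def unaries : MotzkinTree → ℕ
  | leaf => 0
  | unary t => 1 + t.unaries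
  | binary l r => l.unaries + r.unaries

end MotzkinTree

/-- `M q` : ordinary generating function of Motzkin trees with exactly `q` unary
nodes, counted by total number of nodes. -/
noncomputable def motzkinGF (q : ℕ) : PowerSeries ℚ :=
  PowerSeries.mk fun n =>
    (Nat.card {t : MotzkinTree // t.size = n ∧ t.unaries = q} : ℚ)

open Finset

namespace MotzkinTree

lemma one_le_size (t : MotzkinTree) : 1 ≤ t.size := by
  cases t <;> simp only [size] <;> omega

lemma finite_setOf_size_le (n : ℕ) : {t : MotzkinTree | t.size ≤ n}.Finite := by
  induction n with
  | zero => exact Set.finite_empty.subset fun t ht => absurd (one_le_size t) (by simp_all)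
  | succ n ih =>
    refine ((Set.finite_singleton leaf).union
      ((ih.image unary).union (ih.image2 binary ih))).subset ?_
    rintro (_ | t | ⟨l, r⟩) (h : size _ ≤ n + 1) <;> simp only [size] at h
    · exact .inl rfl
    · exact .inr (.inl ⟨t, show t.size ≤ n by omega, rfl⟩)
    · have := one_le_size l; have := one_le_size r
      exact .inr (.inr ⟨l, show l.size ≤ n by omega, r, show r.size ≤ n by omega, rfl⟩)

abbrev OfSizeAndUnaries (n q : ℕ) : Type := {t : MotzkinTree // t.size = n ∧ t.unaries = q}

instance (n : ℕ) (p : MotzkinTree → Prop) : Finite {t : MotzkinTree // t.size = n ∧ p t} :=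
  ((finite_setOf_size_le n).subset fun _ h => h.1.le).to_subtype

def ofSizeAndUnariesSuccEquiv (n q : ℕ) :
    OfSizeAndUnaries (n + 1) q ≃
      PLift (n = 0 ∧ q = 0) ⊕ {t : MotzkinTree // t.size = n ∧ t.unaries + 1 = q} ⊕
        Σ k : antidiagonal q, Σ i : antidiagonal n,
          OfSizeAndUnaries i.1.1 k.1.1 × OfSizeAndUnaries i.1.2 k.1.2 where
  toFun
    | ⟨leaf, h⟩ => .inl ⟨by simp only [size, unaries] at h; omega⟩
    | ⟨unary t, h⟩ => .inr (.inl ⟨t, by simp only [size, unaries] at h; omega⟩)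
    | ⟨binary l r, h⟩ => by
        simp only [size, unaries] at h
        exact .inr (.inr ⟨⟨(l.unaries, r.unaries), mem_antidiagonal.2 h.2⟩,
          ⟨(l.size, r.size), mem_antidiagonal.2 (by omega)⟩,
          ⟨l, rfl, rfl⟩, ⟨r, rfl, rfl⟩⟩)
  invFun
    | .inl h => ⟨leaf, by simp [size, unaries, h.down.1, h.down.2]⟩
    | .inr (.inl ⟨t, h⟩) => ⟨unary t, by simp only [size, unaries]; omega⟩
    | .inr (.inr ⟨k, i, l, r⟩) => ⟨binary l r, by
        have hk := mem_antidiagonal.1 k.2; have hi := mem_antidiagonal.1 i.2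
        simp only [size, unaries, l.2.1, l.2.2, r.2.1, r.2.2]; omega⟩
  left_inv := by rintro ⟨_ | _ | _, h⟩ <;> rfl
  right_inv := by
    rintro (_ | _ | ⟨⟨⟨_, _⟩, _⟩, ⟨⟨_, _⟩, _⟩, ⟨l, hl⟩, ⟨r, hr⟩⟩)
    · rfl
    · rfl
    · obtain rfl : _ = l.size := hl.1.symm
      obtain rfl : _ = l.unaries := hl.2.symm
      obtain rfl : _ = r.size := hr.1.symm
      obtain rfl : _ = r.unaries := hr.2.symm
      rfl

end MotzkinTree

open MotzkinTree

lemma coeff_motzkinGF (n q : ℕ) : coeff n (motzkinGF q) = Nat.card (OfSizeAndUnaries n q) :=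
  coeff_mk _ _

lemma coeff_zero_motzkinGF (q : ℕ) : coeff 0 (motzkinGF q) = 0 := by
  have : IsEmpty (OfSizeAndUnaries 0 q) := ⟨fun t => (one_le_size t.1).not_gt (by omega)⟩
  simp [coeff_motzkinGF]

lemma coeff_succ_motzkinGF (n q : ℕ) :
    coeff (n + 1) (motzkinGF q) = (if n = 0 ∧ q = 0 then 1 else 0) +
      Nat.card {t : MotzkinTree // t.size = n ∧ t.unaries + 1 = q} +
      ∑ k ∈ antidiagonal q, coeff n (motzkinGF k.1 * motzkinGF k.2) := by
  rw [coeff_motzkinGF, Nat.card_congr (ofSizeAndUnariesSuccEquiv n q), Nat.card_sum,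
    Nat.card_sum, Nat.card_sigma, ← sum_coe_sort (antidiagonal q)]
  simp only [Nat.card_sigma, Nat.card_prod, coeff_mul, coeff_motzkinGF,
    ← sum_coe_sort (antidiagonal n)]
  push_cast
  split_ifs with h <;> simp [h]

lemma motzkinGF_zero : motzkinGF 0 = X + X * motzkinGF 0 ^ 2 := by
  ext (_ | n)
  · simp [coeff_zero_motzkinGF]
  · rw [coeff_succ_motzkinGF, map_add, coeff_succ_X_mul, coeff_X]
    simp [sq]

lemma motzkinGF_succ (q : ℕ) :
    motzkinGF (q + 1) =
      X * motzkinGF q + X * ∑ k ∈ antidiagonal (q + 1), motzkinGF k.1 * motzkinGF k.2 := by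
  ext (_ | n)
  · simp [coeff_zero_motzkinGF]
  · rw [coeff_succ_motzkinGF, map_add, coeff_succ_X_mul, coeff_succ_X_mul, map_sum,
      coeff_motzkinGF]
    simp

lemma sum_antidiagonal_eq_add_add_sum_Ico {β : Type*} [AddCommMonoid β] (f : ℕ → ℕ → β)
    {q : ℕ} (hq : 1 ≤ q) :
    ∑ k ∈ antidiagonal q, f k.1 k.2 = f 0 q + f q 0 + ∑ l ∈ Ico 1 q, f l (q - l) := by
  rw [Nat.sum_antidiagonal_eq_sum_range_succ f, range_eq_Ico, sum_Ico_succ_top (Nat.zero_le q),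
    sum_eq_sum_Ico_succ_bot (by omega), Nat.sub_zero, Nat.sub_self]
  abel

theorem motzkinGF_eqs :
    (∃ S : PowerSeries ℚ, S ^ 2 = 1 - 4 * X ^ 2 ∧ constantCoeff S = 1 ∧
      2 * X * motzkinGF 0 = 1 - S) ∧
    (∀ q : ℕ, 1 ≤ q →
      (1 - 2 * X * motzkinGF 0) * motzkinGF q =
        X * motzkinGF (q - 1) +
          X * ∑ ℓ ∈ Finset.Ico 1 q, motzkinGF ℓ * motzkinGF (q - ℓ)) := by
  refine ⟨⟨1 - 2 * X * motzkinGF 0, ?_, by simp, by ring⟩, fun q hq => ?_⟩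
  · linear_combination (-4 * X : PowerSeries ℚ) * motzkinGF_zero
  · obtain ⟨q, rfl⟩ := Nat.exists_eq_add_of_le' hq
    have hsucc := motzkinGF_succ q
    rw [sum_antidiagonal_eq_add_add_sum_Ico (fun a b => motzkinGF a * motzkinGF b) hq] at hsucc
    rw [Nat.add_sub_cancel]
    linear_combination hsucc
end

section
/- Let a_2 = 1 and a_q = a_{q-1} + (1/4)·∑_{ℓ=2}^{q-2} a_ℓ·a_{q-ℓ} for q ≥ 3. Then a_q = 2^{2-q}·C_{q-1} for all q ≥ 2, where C_n = binomial(2n,n)/(n+1) is the n-th Catalan number. -/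
/-! Both sides satisfy the recurrence and agree at `q = 2`, so they agree everywhere. For the
right-hand side, Segner's recurrence `C (n + 2) = ∑ i + j = n + 1, C i * C j` with its two boundary
terms split off is exactly the recurrence, once the factor `1 / 4` is absorbed by the powers
`2 ^ (2 - q)`. -/

open Finset

theorem catalan_add_two (n : ℕ) :
    catalan (n + 2) =
      2 * catalan (n + 1) + ∑ ℓ ∈ Icc 2 (n + 1), catalan (ℓ - 1) * catalan (n + 2 - ℓ) := by
  have middle : ∑ ℓ ∈ Icc 2 (n + 1), catalan (ℓ - 1) * catalan (n + 2 - ℓ) =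
      ∑ i ∈ range n, catalan (i + 1) * catalan (n - i) := by
    rw [← Ico_add_one_right_eq_Icc, sum_Ico_eq_sum_range]
    refine sum_congr rfl fun i hi => ?_
    rw [mem_range] at hi
    congr 2 <;> omega
  rw [middle, catalan_succ, Fin.sum_univ_eq_sum_range (fun i => catalan i * catalan (n + 1 - i)),
    sum_range_succ, sum_range_succ']
  simp only [catalan_zero, Nat.sub_zero, Nat.sub_self, mul_one, one_mul]
  rw [sum_congr rfl fun i (hi : i ∈ range n) => by rw [show n + 1 - (i + 1) = n - i by omega]]
  ring

theorem cast_catalan_eq_choose_div {K : Type*} [Field K] [CharZero K] (n : ℕ) :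
    (catalan n : K) = (2 * n).choose n / (n + 1) := by
  rw [eq_div_iff n.cast_add_one_ne_zero, ← Nat.centralBinom_eq_two_mul_choose,
    ← succ_mul_catalan_eq_centralBinom]
  push_cast
  ring

section

variable {R : Type*} [Semiring R]

def QuadraticRecurrence (c : R) (a : ℕ → R) : Prop :=
  ∀ q : ℕ, 3 ≤ q → a q = a (q - 1) + c * ∑ ℓ ∈ Icc 2 (q - 2), a ℓ * a (q - ℓ)

theorem QuadraticRecurrence.eq_of_eq_two {c : R} {a b : ℕ → R}
    (ha : QuadraticRecurrence c a) (hb : QuadraticRecurrence c b) (h2 : a 2 = b 2) :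
    ∀ q : ℕ, 2 ≤ q → a q = b q := by
  intro q
  induction q using Nat.strong_induction_on with
  | _ q ih =>
    intro hq
    obtain rfl | hq := hq.eq_or_lt
    · exact h2
    rw [ha q hq, hb q hq, ih (q - 1) (by omega) (by omega)]
    congr 2
    refine sum_congr rfl fun ℓ hℓ => ?_
    rw [mem_Icc] at hℓ
    rw [ih ℓ (by omega) hℓ.1, ih (q - ℓ) (by omega) (by omega)]

end

theorem quadraticRecurrence_catalan :
    QuadraticRecurrence (1 / 4 : ℚ) fun q => 2 ^ ((2 : ℤ) - q) * catalan (q - 1) := by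
  intro q hq
  obtain ⟨n, rfl⟩ : ∃ n, q = n + 3 := ⟨q - 3, by omega⟩
  have summand : ∀ ℓ ∈ Icc 2 (n + 1),
      (2 : ℚ) ^ ((2 : ℤ) - ℓ) * catalan (ℓ - 1) *
          (2 ^ ((2 : ℤ) - (n + 3 - ℓ : ℕ)) * catalan (n + 3 - ℓ - 1)) =
        4 * 2 ^ ((2 : ℤ) - (n + 3 : ℕ)) * (catalan (ℓ - 1) * catalan (n + 2 - ℓ) : ℕ) := by
    intro ℓ hℓ
    rw [mem_Icc] at hℓ
    rw [show n + 3 - ℓ - 1 = n + 2 - ℓ by omega, Nat.cast_sub (by omega : ℓ ≤ n + 3),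
      show (4 : ℚ) = 2 ^ (2 : ℤ) by norm_num, ← zpow_add₀ two_ne_zero]
    push_cast
    rw [mul_mul_mul_comm, ← zpow_add₀ two_ne_zero]
    ring_nf
  simp only [show n + 3 - 1 = n + 2 by omega, show n + 3 - 2 = n + 1 by omega,
    show n + 2 - 1 = n + 1 by omega]
  rw [sum_congr rfl summand, ← mul_sum, ← Nat.cast_sum, catalan_add_two]
  push_cast
  rw [show (2 : ℤ) - (n + 2) = 1 + (2 - (n + 3)) by ring, zpow_add₀ two_ne_zero]
  ring

theorem a_seq_eq_catalan (a : ℕ → ℚ)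
    (ha2 : a 2 = 1)
    (harec : ∀ q : ℕ, 3 ≤ q →
      a q = a (q - 1) + (1 / 4) * ∑ ℓ ∈ Finset.Icc 2 (q - 2), a ℓ * a (q - ℓ)) :
    ∀ q : ℕ, 2 ≤ q →
      a q = (2 : ℚ) ^ ((2 : ℤ) - (q : ℤ)) *
        ((Nat.choose (2 * (q - 1)) (q - 1) : ℚ) / ((q - 1 : ℕ) + 1)) := by
  intro q hq
  rw [QuadraticRecurrence.eq_of_eq_two harec quadraticRecurrence_catalan (by simp [ha2]) q hq,
    cast_catalan_eq_choose_div]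
end

section
/- For each k ≥ 0 define real functions R̃_0(z) = 1 - 4z^2 and R̃_k(z) = 1 - 2z - 4z^2 + 2z·sqrt(R̃_{k-1}(z)) for k ≥ 1. Then for every k ≥ 1, R̃_k is strictly decreasing on the positive real interval where it is defined (i.e., where all inner radicands are nonnegative). -/
open Real

/-- The nested radicands `R̃_k` for Motzkin trees of unary height at most `k`:
`R̃_0(z) = 1 - 4z²`, `R̃_k(z) = 1 - 2z - 4z² + 2z·√(R̃_{k-1}(z))`. -/
noncomputable def Rtilde : ℕ → ℝ → ℝ
  | 0, z => 1 - 4 * z ^ 2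
  | k + 1, z => 1 - 2 * z - 4 * z ^ 2 + 2 * z * Real.sqrt (Rtilde k z)

lemma Rtilde_le_one (j : ℕ) (z : ℝ) (hz : 0 ≤ z) : Rtilde j z ≤ 1 := by
  induction j with
  | zero => simp only [Rtilde]; nlinarith
  | succ n ih =>
    have h := Real.sqrt_le_one.mpr ih
    have h0 := Real.sqrt_nonneg (Rtilde n z)
    simp only [Rtilde]; nlinarith

lemma Rtilde_anti (j : ℕ) {x y : ℝ} (hx : 0 < x) (hxy : x < y) :
    Rtilde j y ≤ Rtilde j x := by
  induction j with
  | zero => simp only [Rtilde]; nlinarith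
  | succ n ih =>
    have hab := Real.sqrt_le_sqrt ih
    have hb1 := Real.sqrt_le_one.mpr (Rtilde_le_one n y (by linarith))
    have hb0 := Real.sqrt_nonneg (Rtilde n y)
    simp only [Rtilde]; nlinarith

theorem Rtilde_strictAnti (k : ℕ) (hk : 1 ≤ k) (x y : ℝ)
    (hx : 0 < x) (hxy : x < y)
    (hdef : ∀ j : ℕ, j < k → 0 ≤ Rtilde j x ∧ 0 ≤ Rtilde j y) :
    Rtilde k y < Rtilde k x := by
  cases k with
  | zero => omega
  | succ n =>
    have hab := Real.sqrt_le_sqrt (Rtilde_anti n hx hxy)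
    have hb1 := Real.sqrt_le_one.mpr (Rtilde_le_one n y (by linarith))
    have hb0 := Real.sqrt_nonneg (Rtilde n y)
    simp only [Rtilde]; nlinarith
end

section
/- Let ρ̃_k be the smallest positive real zero of R̃_k, where R̃_0(z) = 1 - 4z^2 and R̃_k(z) = 1 - 2z - 4z^2 + 2z·sqrt(R̃_{k-1}(z)). Then the sequence (ρ̃_k)_{k≥0} is strictly decreasing and bounded below by 1/3. -/
open Real

lemma Rtilde_continuous (k : ℕ) : Continuous (Rtilde k) := by
  induction k with
  | zero => simp only [Rtilde]; fun_prop
  | succ k ih => simp only [Rtilde]; fun_prop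

/-- The fixed-point function `S z = (z + √((1-3z)(1+z)))²`. -/
noncomputable def auxS (z : ℝ) : ℝ := (z + Real.sqrt ((1 - 3*z) * (1 + z)))^2

lemma auxS_lower (z : ℝ) (hz : 0 < z) (hz3 : z ≤ 1/3) (k : ℕ) :
    auxS z ≤ Rtilde k z := by
  have harg : 0 ≤ (1 - 3*z) * (1 + z) := by nlinarith
  set s := Real.sqrt ((1 - 3*z) * (1 + z)) with hs
  have hs0 : 0 ≤ s := Real.sqrt_nonneg _
  have hssq : s^2 = (1 - 3*z) * (1 + z) := Real.sq_sqrt harg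
  have hSval : auxS z = 1 - 2*z - 2*z^2 + 2*z*s := by
    simp only [auxS, ← hs]; nlinarith
  induction k with
  | zero =>
    have hsle : s ≤ 1 - z := by
      have : s ≤ Real.sqrt ((1-z)^2) := by
        apply Real.sqrt_le_sqrt; nlinarith
      rwa [Real.sqrt_sq (by linarith)] at this
    simp only [Rtilde]
    nlinarith
  | succ k ih =>
    have hSnn : 0 ≤ auxS z := sq_nonneg _
    have hsqmono : Real.sqrt (auxS z) ≤ Real.sqrt (Rtilde k z) :=
      Real.sqrt_le_sqrt ih
    have hsqS : Real.sqrt (auxS z) = z + s := by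
      rw [auxS, Real.sqrt_sq (by positivity)]
    simp only [Rtilde]
    nlinarith [hsqmono]

lemma Rtilde_pos (k : ℕ) (z : ℝ) (hz : 0 < z) (hz3 : z ≤ 1/3) :
    0 < Rtilde k z := by
  have h := auxS_lower z hz hz3 k
  have : 0 < auxS z := by
    have := Real.sqrt_nonneg ((1 - 3*z) * (1 + z))
    unfold auxS; positivity
  linarith

/-- If `ρ k` is the smallest positive real zero of `R̃_k`, then the sequence
`(ρ k)` is strictly decreasing and bounded below by `1/3`. -/
theorem rhoTilde_strictAnti_and_ge_third (ρ : ℕ → ℝ)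
    (hpos : ∀ k, 0 < ρ k)
    (hroot : ∀ k, Rtilde k (ρ k) = 0)
    (hmin : ∀ k, ∀ x : ℝ, 0 < x → Rtilde k x = 0 → ρ k ≤ x) :
    (∀ k, ρ (k + 1) < ρ k) ∧ (∀ k, (1 : ℝ) / 3 ≤ ρ k) := by
  have hgt : ∀ k, (1 : ℝ) / 3 < ρ k := by
    intro k
    by_contra h
    push_neg at h
    have := Rtilde_pos k (ρ k) (hpos k) h
    rw [hroot k] at this
    exact lt_irrefl 0 this
  refine ⟨?_, fun k => le_of_lt (hgt k)⟩
  intro k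
  have hneg : Rtilde (k + 1) (ρ k) < 0 := by
    have : Rtilde (k + 1) (ρ k) = 1 - 2 * ρ k - 4 * (ρ k) ^ 2 := by
      simp [Rtilde, hroot k]
    rw [this]
    nlinarith [hgt k]
  have hposval : 0 < Rtilde (k + 1) (1/3 : ℝ) :=
    Rtilde_pos (k + 1) (1/3) (by norm_num) le_rfl
  -- IVT on [1/3, ρ k]
  have hle : (1:ℝ)/3 ≤ ρ k := le_of_lt (hgt k)
  have hmem : (0 : ℝ) ∈ Set.Icc (Rtilde (k+1) (ρ k)) (Rtilde (k+1) (1/3)) :=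
    ⟨le_of_lt hneg, le_of_lt hposval⟩
  obtain ⟨c, hc, hfc⟩ :=
    intermediate_value_Icc' hle ((Rtilde_continuous (k+1)).continuousOn) hmem
  have hc0 : 0 < c := lt_of_lt_of_le (by norm_num) hc.1
  have hcne : c ≠ ρ k := by
    intro h; rw [h] at hfc; linarith
  exact lt_of_le_of_lt (hmin (k+1) c hc0 hfc) (lt_of_le_of_ne hc.2 hcne)
end

section
/- Define c_1 = 1 and c_j = 4j - 5 + 2·sqrt(c_{j-1}) for j ≥ 2. Then for every j ≥ 2 one has 4j - 4 ≤ c_j ≤ 4j + 4·sqrt(j), and as j → ∞, c_j = 4j + 4·sqrt(j) - 3 + O(1/sqrt(j)). -/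
open Real Filter Asymptotics

/-- `c₁ = 1`, `c_j = 4j - 5 + 2√(c_{j-1})` for `j ≥ 2`. -/
noncomputable def cSeq : ℕ → ℝ
  | 0 => 0
  | 1 => 1
  | j + 2 => 4 * (j + 2 : ℝ) - 5 + 2 * Real.sqrt (cSeq (j + 1))

lemma cSeq_one_le : ∀ n : ℕ, 1 ≤ cSeq (n + 1) := by
  intro n
  induction n with
  | zero => simp [cSeq]
  | succ m ih =>
    show 1 ≤ cSeq (m + 2)
    rw [cSeq]
    have h1 : 0 ≤ Real.sqrt (cSeq (m + 1)) := Real.sqrt_nonneg _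
    have h2 : (0:ℝ) ≤ (m:ℝ) := Nat.cast_nonneg m
    nlinarith

lemma cSeq_lower (n : ℕ) : 4 * ((n:ℝ) + 2) - 3 ≤ cSeq (n + 2) := by
  rw [cSeq]
  have h1 : 1 ≤ Real.sqrt (cSeq (n + 1)) := by
    rw [show (1:ℝ) = Real.sqrt 1 by simp]
    exact Real.sqrt_le_sqrt (cSeq_one_le n)
  linarith

lemma cSeq_two : cSeq 2 = 5 := by
  rw [show (2:ℕ) = 0 + 2 from rfl, cSeq]; simp [cSeq]; norm_num

lemma cSeq_upper : ∀ n : ℕ, cSeq (n + 2) ≤ 4 * ((n:ℝ) + 2) + 4 * Real.sqrt ((n:ℝ) + 2) - 3 := by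
  intro n
  induction n with
  | zero =>
    have h2 : (0:ℝ) ≤ Real.sqrt (((0:ℕ):ℝ) + 2) := Real.sqrt_nonneg _
    show cSeq 2 ≤ _
    rw [cSeq_two]
    push_cast at h2 ⊢
    linarith
  | succ m ih =>
    have hrec : cSeq (m + 1 + 2) = 4 * ((m:ℝ) + 3) - 5 + 2 * Real.sqrt (cSeq (m + 2)) := by
      rw [cSeq]; push_cast; ring_nf
    have hs : Real.sqrt ((m:ℝ) + 2) ≤ Real.sqrt ((m:ℝ) + 3) :=
      Real.sqrt_le_sqrt (by linarith)
    have hs3 : 0 ≤ Real.sqrt ((m:ℝ) + 3) := Real.sqrt_nonneg _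
    have hsq : Real.sqrt ((m:ℝ) + 3) ^ 2 = (m:ℝ) + 3 := Real.sq_sqrt (by positivity)
    have key : Real.sqrt (cSeq (m + 2)) ≤ 2 * Real.sqrt ((m:ℝ) + 3) + 1 := by
      have h1 : cSeq (m + 2) ≤ (2 * Real.sqrt ((m:ℝ) + 3) + 1) ^ 2 := by
        calc cSeq (m + 2) ≤ 4 * ((m:ℝ) + 2) + 4 * Real.sqrt ((m:ℝ) + 2) - 3 := ih
          _ ≤ (2 * Real.sqrt ((m:ℝ) + 3) + 1) ^ 2 := by nlinarith
      calc Real.sqrt (cSeq (m + 2)) ≤ Real.sqrt ((2 * Real.sqrt ((m:ℝ) + 3) + 1) ^ 2) :=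
            Real.sqrt_le_sqrt h1
        _ = 2 * Real.sqrt ((m:ℝ) + 3) + 1 := Real.sqrt_sq (by linarith)
    rw [hrec]
    have hcast : ((m + 1 : ℕ):ℝ) + 2 = (m:ℝ) + 3 := by push_cast; ring
    rw [hcast]
    linarith

lemma cSeq_lower_asym : ∀ n : ℕ,
    4 * ((n:ℝ) + 4) + 4 * Real.sqrt ((n:ℝ) + 4) - 3 - 16 / Real.sqrt ((n:ℝ) + 4) ≤ cSeq (n + 4) := by
  intro n
  induction n with
  | zero =>
    have hc3 : (11:ℝ) ≤ cSeq 3 := by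
      rw [show (3:ℕ) = 1 + 2 from rfl, cSeq]
      have h : (2:ℝ) ≤ Real.sqrt (cSeq (1 + 1)) := by
        rw [Real.le_sqrt (by norm_num) (by rw [show 1+1 = 2 from rfl, cSeq_two]; norm_num)]
        rw [show 1 + 1 = 2 from rfl, cSeq_two]; norm_num
      push_cast; linarith
    have hc4 : (17:ℝ) ≤ cSeq 4 := by
      rw [show (4:ℕ) = 2 + 2 from rfl, cSeq]
      have h : (3:ℝ) ≤ Real.sqrt (cSeq (2 + 1)) := by
        rw [Real.le_sqrt (by norm_num) (by rw [show 2+1 = 3 from rfl]; linarith)]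
        rw [show 2 + 1 = 3 from rfl]; nlinarith
      push_cast; linarith
    have hs : Real.sqrt (((0:ℕ):ℝ) + 4) = 2 := by
      rw [show (((0:ℕ):ℝ) + 4) = 2^2 by norm_num]
      exact Real.sqrt_sq (by norm_num)
    rw [hs]
    push_cast
    norm_num
    show _ ≤ cSeq 4
    linarith
  | succ m ih =>
    set s := Real.sqrt ((m:ℝ) + 4) with hs_def
    set t := Real.sqrt ((m:ℝ) + 5) with ht_def
    have hs2 : s ^ 2 = (m:ℝ) + 4 := Real.sq_sqrt (by positivity)
    have ht2 : t ^ 2 = (m:ℝ) + 5 := Real.sq_sqrt (by positivity)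
    have hm0 : (0:ℝ) ≤ (m:ℝ) := Nat.cast_nonneg m
    have hsge : (2:ℝ) ≤ s := by
      rw [hs_def, show (2:ℝ) = Real.sqrt 4 by
        rw [show (4:ℝ) = 2^2 by norm_num]; exact (Real.sqrt_sq (by norm_num)).symm]
      exact Real.sqrt_le_sqrt (by linarith)
    have htge : s ≤ t := Real.sqrt_le_sqrt (by linarith)
    have hs0 : (0:ℝ) < s := by linarith
    have ht0 : (0:ℝ) < t := by linarith
    have hdiff : (t - s) * (t + s) = 1 := by nlinarith
    have hprod : (0:ℝ) ≤ (t - s) * (t + s - 4) :=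
      mul_nonneg (by linarith) (by linarith)
    have h1 : 4 * t - 4 * s ≤ 1 := by nlinarith
    have h2 : 16 / s - 16 / t ≤ 1 := by
      rw [div_sub_div _ _ (ne_of_gt hs0) (ne_of_gt ht0), div_le_one (by positivity)]
      nlinarith
    have h3 : 64 / ((m:ℝ) + 5) ≤ 64 / 5 := by
      rw [div_le_div_iff₀ (by positivity) (by norm_num)]
      linarith
    have h4 : (0:ℝ) ≤ 16 / t := by positivity
    have hA0 : (0:ℝ) ≤ 4 * ((m:ℝ) + 4) + 4 * s - 3 - 16 / s := by
      have : 16 / s ≤ 8 := by rw [div_le_iff₀ hs0]; nlinarith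
      nlinarith
    have hb0 : (0:ℝ) ≤ 2 * t + 1 - 8 / t := by
      have : 8 / t ≤ 4 := by rw [div_le_iff₀ ht0]; nlinarith
      linarith
    have hexp : (2 * t + 1 - 8 / t)^2 = 4 * t^2 + 4 * t - 31 - 16 / t + 64 / t^2 := by
      field_simp
      ring
    have hb2A : (2 * t + 1 - 8 / t)^2 ≤ 4 * ((m:ℝ) + 4) + 4 * s - 3 - 16 / s := by
      rw [hexp, ht2]
      linarith
    have hsqrtA : 2 * t + 1 - 8 / t ≤ Real.sqrt (cSeq (m + 4)) := by
      rw [Real.le_sqrt hb0 (le_trans hA0 ih)]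
      exact le_trans hb2A ih
    have hcast : ((m + 1 : ℕ):ℝ) + 4 = (m:ℝ) + 5 := by push_cast; ring
    rw [hcast, show m + 1 + 4 = m + 3 + 2 from rfl, cSeq,
      show m + 3 + 1 = m + 4 from rfl]
    push_cast
    rw [← ht_def]
    have h8 : 16 / t = 2 * (8 / t) := by ring
    linarith

theorem cSeq_bounds_and_asymptotics :
    (∀ j : ℕ, 2 ≤ j →
      4 * (j : ℝ) - 4 ≤ cSeq j ∧ cSeq j ≤ 4 * (j : ℝ) + 4 * Real.sqrt j) ∧
    (fun j : ℕ => cSeq j - (4 * (j : ℝ) + 4 * Real.sqrt j - 3)) =O[atTop]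
      (fun j : ℕ => 1 / Real.sqrt j) := by
  have upper : ∀ j : ℕ, 2 ≤ j → cSeq j ≤ 4 * (j : ℝ) + 4 * Real.sqrt j - 3 := by
    intro j hj
    obtain ⟨n, rfl⟩ := Nat.exists_eq_add_of_le' hj
    have := cSeq_upper n
    push_cast at this ⊢
    linarith
  have lower : ∀ j : ℕ, 2 ≤ j → 4 * (j : ℝ) - 3 ≤ cSeq j := by
    intro j hj
    obtain ⟨n, rfl⟩ := Nat.exists_eq_add_of_le' hj
    have := cSeq_lower n
    push_cast at this ⊢
    linarith
  constructor
  · intro j hj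
    refine ⟨by linarith [lower j hj], by linarith [upper j hj, Real.sqrt_nonneg (j:ℝ)]⟩
  · rw [isBigO_iff]
    refine ⟨16, ?_⟩
    filter_upwards [eventually_ge_atTop 4] with j hj
    obtain ⟨n, rfl⟩ := Nat.exists_eq_add_of_le' hj
    have hla := cSeq_lower_asym n
    have hup := upper (n + 4) (by omega)
    have hsp : (0:ℝ) < Real.sqrt (((n + 4 : ℕ)):ℝ) := by
      apply Real.sqrt_pos.mpr; positivity
    rw [Real.norm_eq_abs, Real.norm_eq_abs, abs_le]
    push_cast at hla hup hsp ⊢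
    have habs : |1 / Real.sqrt ((n:ℝ) + 4)| = 1 / Real.sqrt ((n:ℝ) + 4) := by
      rw [abs_of_pos]; positivity
    rw [habs]
    have h16 : 16 * (1 / Real.sqrt ((n:ℝ) + 4)) = 16 / Real.sqrt ((n:ℝ) + 4) := by ring
    constructor
    · rw [h16]; linarith
    · have : (0:ℝ) ≤ 16 * (1 / Real.sqrt ((n:ℝ) + 4)) := by positivity
      linarith
end

section
/- For fixed k ≥ 1, define R̂_{1,k}(z) = (1-z)^2 - 4kz^2 and, recursively, R̂_{2,k}(z) = 1 - 4(k-1)z^2 - 2z + 2z^2 + 2z·sqrt(R̂_{1,k}(z)), and R̂_{i,k}(z) = 1 - 4(k-i+1)z^2 - 2z + 2z·sqrt(R̂_{i-1,k}(z)) for 3 ≤ i ≤ k+1. Then each R̂_{i,k} is strictly decreasing on the positive real line where defined. -/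
open Real

/-- Nested radicands `R̂_{i,k}` of the generating function of closed lambda-terms
whose bindings all have unary length at most `k`. (`i = 0` is a dummy value.) -/
noncomputable def Rhat (k : ℕ) : ℕ → ℝ → ℝ
  | 0, _ => 1
  | 1, z => (1 - z) ^ 2 - 4 * (k : ℝ) * z ^ 2
  | 2, z => 1 - 4 * ((k : ℝ) - 1) * z ^ 2 - 2 * z + 2 * z ^ 2
      + 2 * z * Real.sqrt (Rhat k 1 z)
  | i + 3, z => 1 - 4 * ((k : ℝ) - ((i : ℝ) + 3) + 1) * z ^ 2 - 2 * z
      + 2 * z * Real.sqrt (Rhat k (i + 2) z)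

lemma Rhat_one_eq (k : ℕ) (z : ℝ) : Rhat k 1 z = (1-z)^2 - 4*(k:ℝ)*z^2 := rfl

lemma Rhat_two_eq (k : ℕ) (z : ℝ) :
    Rhat k 2 z = 1 - 4*((k:ℝ)-1)*z^2 - 2*z + 2*z^2 + 2*z*Real.sqrt (Rhat k 1 z) := rfl

lemma Rhat_succ_eq (k m : ℕ) (z : ℝ) :
    Rhat k (m+3) z = 1 - 4*((k:ℝ) - ((m:ℝ)+3) + 1)*z^2 - 2*z
      + 2*z*Real.sqrt (Rhat k (m+2) z) := rfl

lemma Rhat_third (k : ℕ) (hk : 1 ≤ k) (z : ℝ) (hz : 0 < z)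
    (h : 0 ≤ Rhat k 1 z) : z ≤ 1/3 := by
  have hK : (1 : ℝ) ≤ (k : ℝ) := by exact_mod_cast hk
  rw [Rhat_one_eq] at h
  nlinarith [sq_nonneg z, mul_pos hz hz]

lemma Rhat_sqrt1_le (k : ℕ) (hk : 1 ≤ k) (z : ℝ) (hz : 0 < z)
    (h : 0 ≤ Rhat k 1 z) : Real.sqrt (Rhat k 1 z) ≤ 1 - z := by
  have h3 := Rhat_third k hk z hz h
  have hK : (1 : ℝ) ≤ (k : ℝ) := by exact_mod_cast hk
  have hle : Rhat k 1 z ≤ (1 - z) ^ 2 := by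
    rw [Rhat_one_eq]; nlinarith
  calc Real.sqrt (Rhat k 1 z) ≤ Real.sqrt ((1 - z) ^ 2) := Real.sqrt_le_sqrt hle
    _ = 1 - z := Real.sqrt_sq (by linarith)

lemma Rhat_lt_one (k : ℕ) (hk : 1 ≤ k) :
    ∀ j : ℕ, 1 ≤ j → j ≤ k → ∀ z : ℝ, 0 < z →
    (∀ j' : ℕ, 1 ≤ j' → j' ≤ j → 0 ≤ Rhat k j' z) → Rhat k j z < 1 := by
  have hK : (1 : ℝ) ≤ (k : ℝ) := by exact_mod_cast hk
  intro j
  induction j using Nat.strong_induction_on with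
  | _ j ih =>
    match j with
    | 0 => intro h; omega
    | 1 =>
      intro _ _ z hz _
      rw [Rhat_one_eq]
      nlinarith
    | 2 =>
      intro _ _ z hz h0
      have h1 : 0 ≤ Rhat k 1 z := h0 1 le_rfl (by omega)
      have h3 := Rhat_third k hk z hz h1
      have hlt : Rhat k 1 z < (1 - z) ^ 2 := by
        rw [Rhat_one_eq]; nlinarith
      have hs : Real.sqrt (Rhat k 1 z) < 1 - z := by
        calc Real.sqrt (Rhat k 1 z) < Real.sqrt ((1 - z) ^ 2) :=
              Real.sqrt_lt_sqrt h1 hlt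
          _ = 1 - z := Real.sqrt_sq (by linarith)
      rw [Rhat_two_eq]
      nlinarith [mul_lt_mul_of_pos_left hs (by linarith : (0:ℝ) < 2*z)]
    | (m + 3) =>
      intro _ hjk z hz h0
      have hprev : Rhat k (m + 2) z < 1 := by
        refine ih (m + 2) (by omega) (by omega) (by omega) z hz ?_
        intro j' hj1 hj2; exact h0 j' hj1 (by omega)
      have hs : Real.sqrt (Rhat k (m + 2) z) ≤ 1 := by
        rw [show (1:ℝ) = Real.sqrt 1 by simp]
        exact Real.sqrt_le_sqrt hprev.le
      have hc : (1 : ℝ) ≤ (k : ℝ) - ((m : ℝ) + 3) + 1 := by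
        have : (m : ℝ) + 3 ≤ (k : ℝ) := by exact_mod_cast hjk
        linarith
      rw [Rhat_succ_eq]
      nlinarith [mul_le_mul_of_nonneg_left hs (by linarith : (0:ℝ) ≤ 2*z)]

lemma Rhat_strictAnti_aux (k : ℕ) (hk : 1 ≤ k) :
    ∀ i : ℕ, 1 ≤ i → i ≤ k + 1 → ∀ x y : ℝ, 0 < x → x < y →
    (∀ j : ℕ, 1 ≤ j → j < i → 0 ≤ Rhat k j x ∧ 0 ≤ Rhat k j y) →
    Rhat k i y < Rhat k i x := by
  have hK : (1 : ℝ) ≤ (k : ℝ) := by exact_mod_cast hk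
  intro i
  induction i using Nat.strong_induction_on with
  | _ i ih =>
    match i with
    | 0 => intro h; omega
    | 1 =>
      intro _ _ x y hx hxy _
      have hy : 0 < y := hx.trans hxy
      rw [Rhat_one_eq, Rhat_one_eq]
      nlinarith [mul_pos (sub_pos.2 hxy) (add_pos hx hy),
        mul_nonneg (sub_nonneg.2 hK)
          (mul_pos (sub_pos.2 hxy) (add_pos hx hy)).le]
    | 2 =>
      intro _ _ x y hx hxy hdef
      have hy : 0 < y := hx.trans hxy
      have h1x : 0 ≤ Rhat k 1 x := (hdef 1 le_rfl (by omega)).1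
      have h1y : 0 ≤ Rhat k 1 y := (hdef 1 le_rfl (by omega)).2
      have h3x := Rhat_third k hk x hx h1x
      have h3y := Rhat_third k hk y hy h1y
      set a := Real.sqrt (Rhat k 1 x) with ha
      set b := Real.sqrt (Rhat k 1 y) with hb
      have ha0 : 0 ≤ a := Real.sqrt_nonneg _
      have hb0 : 0 ≤ b := Real.sqrt_nonneg _
      have hax : a ^ 2 = (1 - x) ^ 2 - 4 * (k : ℝ) * x ^ 2 := by
        rw [ha, Real.sq_sqrt h1x, Rhat_one_eq]
      have hby : b ^ 2 = (1 - y) ^ 2 - 4 * (k : ℝ) * y ^ 2 := by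
        rw [hb, Real.sq_sqrt h1y, Rhat_one_eq]
      have haux : a ≤ 1 - x := Rhat_sqrt1_le k hk x hx h1x
      have hbuy : b ≤ 1 - y := Rhat_sqrt1_le k hk y hy h1y
      have hba : b ≤ a := by
        apply Real.sqrt_le_sqrt
        rw [Rhat_one_eq, Rhat_one_eq]
        nlinarith [mul_pos (sub_pos.2 hxy) (add_pos hx hy),
          mul_nonneg (sub_nonneg.2 hK)
            (mul_pos (sub_pos.2 hxy) (add_pos hx hy)).le]
      have hab2 : a ^ 2 - b ^ 2 ≤ 2 * (a - b) := by
        nlinarith [mul_nonneg (sub_nonneg.2 hba) (by linarith : (0:ℝ) ≤ 2 - a - b)]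
      rw [Rhat_two_eq, Rhat_two_eq, ← ha, ← hb]
      nlinarith [mul_nonneg hy.le (by linarith : (0:ℝ) ≤ 2*(a-b) - (a^2 - b^2)),
        mul_nonneg (sub_pos.2 hxy).le (by linarith : (0:ℝ) ≤ 1 - x - a),
        mul_nonneg (mul_pos (sub_pos.2 hxy) (add_pos hx hy)).le
          (by linarith : (0:ℝ) ≤ (k:ℝ) - 1),
        mul_pos (mul_pos (sub_pos.2 hxy) (add_pos hx hy)) hy,
        mul_nonneg (mul_nonneg (mul_pos (sub_pos.2 hxy) (add_pos hx hy)).le hy.le)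
          (by linarith : (0:ℝ) ≤ (k:ℝ) - 1)]
    | (m + 3) =>
      intro _ hik x y hx hxy hdef
      have hy : 0 < y := hx.trans hxy
      have hIH : Rhat k (m + 2) y < Rhat k (m + 2) x := by
        refine ih (m + 2) (by omega) (by omega) (by omega) x y hx hxy ?_
        intro j hj1 hj2; exact hdef j hj1 (by omega)
      have h0x : 0 ≤ Rhat k (m + 2) x := (hdef (m + 2) (by omega) (by omega)).1
      have hlt1 : Rhat k (m + 2) x < 1 := by
        refine Rhat_lt_one k hk (m + 2) (by omega) (by omega) x hx ?_
        intro j' hj1 hj2; exact (hdef j' hj1 (by omega)).1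
      set a := Real.sqrt (Rhat k (m + 2) x) with ha
      set b := Real.sqrt (Rhat k (m + 2) y) with hb
      have hb0 : 0 ≤ b := Real.sqrt_nonneg _
      have hba : b ≤ a := Real.sqrt_le_sqrt hIH.le
      have ha1 : a < 1 := by
        rw [ha, show (1:ℝ) = Real.sqrt 1 by simp]
        exact Real.sqrt_lt_sqrt h0x hlt1
      have hc : (0 : ℝ) ≤ (k : ℝ) - ((m : ℝ) + 3) + 1 := by
        have : (m : ℝ) + 3 ≤ (k : ℝ) + 1 := by exact_mod_cast hik
        linarith
      rw [Rhat_succ_eq, Rhat_succ_eq, ← ha, ← hb]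
      nlinarith [mul_nonneg hy.le (sub_nonneg.2 hba),
        mul_pos (sub_pos.2 hxy) (sub_pos.2 ha1),
        mul_nonneg hc (by nlinarith : (0:ℝ) ≤ y ^ 2 - x ^ 2)]

theorem Rhat_strictAnti (k : ℕ) (hk : 1 ≤ k) (i : ℕ) (hi1 : 1 ≤ i)
    (hik : i ≤ k + 1) (x y : ℝ) (hx : 0 < x) (hxy : x < y)
    (hdef : ∀ j : ℕ, 1 ≤ j → j < i → 0 ≤ Rhat k j x ∧ 0 ≤ Rhat k j y) :
    Rhat k i y < Rhat k i x := by
  exact Rhat_strictAnti_aux k hk i hi1 hik x y hx hxy hdef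
end

section
/- Define c_1 = 1, c_j = 4j - 5 + 2√(c_{j-1}) for 2 ≤ j ≤ k+1, and let ρ̂_k = 1/(1+2√k). Then for the nested radicands R̂_{i,k} of the bounded-binding-length generating function, one has R̂_{j,k}(ρ̂_k) = c_j · ρ̂_k^2 for all 2 ≤ j ≤ k+1. -/
open Real

lemma cSeq_nonneg : ∀ j : ℕ, 0 ≤ cSeq j
  | 0 => le_refl 0
  | 1 => by norm_num [cSeq]
  | j + 2 => by
      have h := Real.sqrt_nonneg (cSeq (j + 1))
      have : (0 : ℝ) ≤ (j : ℝ) := Nat.cast_nonneg j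
      simp only [cSeq]
      nlinarith

theorem Rhat_at_rhoHat_eq_c (k : ℕ) (hk : 1 ≤ k) :
    ∀ j : ℕ, 2 ≤ j → j ≤ k + 1 →
      Rhat k j (1 / (1 + 2 * Real.sqrt k)) =
        cSeq j * (1 / (1 + 2 * Real.sqrt k)) ^ 2 := by
  set s := Real.sqrt k with hsdef
  have hs : 0 ≤ s := Real.sqrt_nonneg _
  have hs2 : s ^ 2 = (k : ℝ) := Real.sq_sqrt (by positivity)
  have hd : (1 : ℝ) + 2 * s ≠ 0 := by positivity
  set ρ : ℝ := 1 / (1 + 2 * s) with hρ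
  have hρ0 : 0 ≤ ρ := by positivity
  have h1 : Rhat k 1 ρ = 0 := by
    show (1 - ρ) ^ 2 - 4 * (k : ℝ) * ρ ^ 2 = 0
    rw [← hs2, hρ]
    field_simp
    ring
  have key : ∀ i : ℕ, Rhat k (i + 2) ρ = cSeq (i + 2) * ρ ^ 2 := by
    intro i
    induction i with
    | zero =>
        show 1 - 4 * ((k : ℝ) - 1) * ρ ^ 2 - 2 * ρ + 2 * ρ ^ 2
            + 2 * ρ * Real.sqrt (Rhat k 1 ρ) = cSeq 2 * ρ ^ 2
        rw [h1, Real.sqrt_zero]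
        have hc2 : cSeq 2 = 5 := by norm_num [cSeq]
        rw [hc2, ← hs2, hρ]
        field_simp
        ring
    | succ i ih =>
        show 1 - 4 * ((k : ℝ) - ((i : ℝ) + 3) + 1) * ρ ^ 2 - 2 * ρ
            + 2 * ρ * Real.sqrt (Rhat k (i + 2) ρ) = cSeq (i + 3) * ρ ^ 2
        rw [ih]
        have hsq : Real.sqrt (cSeq (i + 2) * ρ ^ 2)
            = Real.sqrt (cSeq (i + 2)) * ρ := by
          rw [Real.sqrt_mul (cSeq_nonneg _), Real.sqrt_sq hρ0]
        rw [hsq]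
        have hc : cSeq (i + 3) = 4 * ((i : ℝ) + 3) - 5
            + 2 * Real.sqrt (cSeq (i + 2)) := by
          show cSeq ((i + 1) + 2) = _
          simp only [cSeq]
          push_cast
          ring_nf
        rw [hc, ← hs2, hρ]
        field_simp
        ring
  intro j hj2 _
  obtain ⟨i, rfl⟩ := Nat.exists_eq_add_of_le hj2
  rw [Nat.add_comm 2 i]
  exact key i
end

section
/- Define sequences u_0 = 0, u_{i+1} = u_i^2 + i + 1, and N_i = u_i^2 - u_i + i. Then N_0 = 0, N_1 = 1, and for all i ≥ 1, N_{i+1} = N_i^2 + 3N_i + 2 + (N_i + 1)·sqrt(4N_i - 4i + 1), where moreover 4N_i - 4i + 1 is a perfect square (equal to (2u_i - 1)^2). -/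
/-- `u₀ = 0`, `u_{i+1} = u_i² + i + 1`. -/
def uSeq : ℕ → ℕ
  | 0 => 0
  | i + 1 => (uSeq i) ^ 2 + i + 1

/-- `N_i = u_i² - u_i + i`. -/
def NSeq (i : ℕ) : ℕ := (uSeq i) ^ 2 - uSeq i + i

theorem NSeq_recurrence :
    NSeq 0 = 0 ∧ NSeq 1 = 1 ∧
    ∀ i : ℕ, 1 ≤ i →
      (4 * NSeq i - 4 * i + 1 = (2 * uSeq i - 1) ^ 2) ∧
      NSeq (i + 1) =
        (NSeq i) ^ 2 + 3 * NSeq i + 2 +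
          (NSeq i + 1) * Nat.sqrt (4 * NSeq i - 4 * i + 1) := by
  refine ⟨rfl, rfl, fun i hi => ?_⟩
  -- uSeq i ≥ 1 for i ≥ 1
  have hu : 1 ≤ uSeq i := by
    cases i with
    | zero => omega
    | succ n => show 1 ≤ uSeq n ^ 2 + n + 1; omega
  obtain ⟨v, hv⟩ : ∃ v, uSeq i = v + 1 := ⟨uSeq i - 1, by omega⟩
  have hN : NSeq i = v ^ 2 + v + i := by
    unfold NSeq
    rw [hv]
    have : (v + 1) ^ 2 = v ^ 2 + 2 * v + 1 := by ring
    omega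
  have hsq : 4 * NSeq i - 4 * i + 1 = (2 * v + 1) ^ 2 := by
    have : (2 * v + 1) ^ 2 = 4 * v ^ 2 + 4 * v + 1 := by ring
    omega
  constructor
  · rw [hsq, hv]; congr 1
  · have hsqrt : Nat.sqrt (4 * NSeq i - 4 * i + 1) = 2 * v + 1 := by
      rw [hsq, Nat.sqrt_eq']
    rw [hsqrt, hN]
    have hN1 : NSeq (i + 1) = ((v + 1) ^ 2 + i) ^ 2 + ((v + 1) ^ 2 + i) + (i + 1) := by
      unfold NSeq
      show (uSeq i ^ 2 + i + 1) ^ 2 - (uSeq i ^ 2 + i + 1) + (i + 1) = _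
      rw [hv]
      have h1 : ((v + 1) ^ 2 + i + 1) ^ 2 =
          ((v + 1) ^ 2 + i) ^ 2 + 2 * ((v + 1) ^ 2 + i) + 1 := by ring
      omega
    rw [hN1]; ring
end

section
/- Fix k ≥ 1 and define the nested radicands R_{1,k}(z) = 1 - 4kz^2 and R_{i,k}(z) = 1 - 4(k-i+1)z^2 - 2z + 2z·sqrt(R_{i-1,k}(z)) for 2 ≤ i ≤ k+1. Then each R_{i,k} is strictly decreasing on the positive real line (in the interval where it is defined as a real function); consequently each R_{i,k} has at most one positive real root. -/
open Real

/-- Nested radicands `R_{i,k}` of the generating function `H_{≤k}` of closed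
lambda-terms of unary height at most `k`. (`i = 0` is a dummy value.) -/
noncomputable def Rbh (k : ℕ) : ℕ → ℝ → ℝ
  | 0, _ => 1
  | 1, z => 1 - 4 * (k : ℝ) * z ^ 2
  | i + 2, z => 1 - 4 * ((k : ℝ) - ((i : ℝ) + 2) + 1) * z ^ 2 - 2 * z
      + 2 * z * Real.sqrt (Rbh k (i + 1) z)

lemma Rbh_le_one (k : ℕ) : ∀ i : ℕ, 1 ≤ i → i ≤ k + 1 → ∀ z : ℝ, 0 < z →
    Rbh k i z ≤ 1 := by
  intro i
  induction i using Nat.strong_induction_on with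
  | _ i IH =>
    match i with
    | 0 => omega
    | 1 =>
      intro _ _ z hz
      simp only [Rbh]
      have : (0:ℝ) ≤ (k:ℝ) := Nat.cast_nonneg k
      nlinarith [sq_nonneg z]
    | j + 2 =>
      intro _ hik z hz
      have hs : Real.sqrt (Rbh k (j+1) z) ≤ 1 :=
        Real.sqrt_le_one.mpr (IH (j+1) (by omega) (by omega) (by omega) z hz)
      have hc : (0:ℝ) ≤ (k:ℝ) - ((j:ℝ) + 2) + 1 := by
        have : (j:ℝ) + 2 ≤ (k:ℝ) + 1 := by exact_mod_cast hik
        linarith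
      simp only [Rbh]
      nlinarith [sq_nonneg z, Real.sqrt_nonneg (Rbh k (j+1) z)]

lemma Rbh_anti (k : ℕ) (hk : 1 ≤ k) : ∀ i : ℕ, 1 ≤ i → i ≤ k + 1 →
    ∀ x y : ℝ, 0 < x → x < y →
    (∀ j : ℕ, 1 ≤ j → j < i → 0 ≤ Rbh k j x ∧ 0 ≤ Rbh k j y) →
    Rbh k i y < Rbh k i x := by
  intro i
  induction i using Nat.strong_induction_on with
  | _ i IH =>
    match i with
    | 0 => omega
    | 1 =>
      intro _ _ x y hx hxy _
      simp only [Rbh]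
      have hk' : (1:ℝ) ≤ (k:ℝ) := by exact_mod_cast hk
      nlinarith [mul_pos (add_pos hx (hx.trans hxy)) (sub_pos.2 hxy)]
    | j + 2 =>
      intro _ hik x y hx hxy hnn
      have hy : 0 < y := hx.trans hxy
      have hrec : Rbh k (j+1) y < Rbh k (j+1) x :=
        IH (j+1) (by omega) (by omega) (by omega) x y hx hxy
          (fun m hm1 hm2 => hnn m hm1 (by omega))
      have hny : 0 ≤ Rbh k (j+1) y := (hnn (j+1) (by omega) (by omega)).2
      have hs : Real.sqrt (Rbh k (j+1) y) < Real.sqrt (Rbh k (j+1) x) :=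
        Real.sqrt_lt_sqrt hny hrec
      have hsx1 : Real.sqrt (Rbh k (j+1) x) ≤ 1 :=
        Real.sqrt_le_one.mpr (Rbh_le_one k (j+1) (by omega) (by omega) x hx)
      have hc : (0:ℝ) ≤ (k:ℝ) - ((j:ℝ) + 2) + 1 := by
        have : (j:ℝ) + 2 ≤ (k:ℝ) + 1 := by exact_mod_cast hik
        linarith
      simp only [Rbh]
      nlinarith [mul_pos hy (sub_pos.2 hs),
        mul_nonneg (sub_nonneg.2 hxy.le) (sub_nonneg.2 hsx1),
        mul_nonneg hc (by nlinarith : (0:ℝ) ≤ y^2 - x^2),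
        Real.sqrt_nonneg (Rbh k (j+1) y)]

theorem Rbh_strictAnti_and_unique_root (k : ℕ) (hk : 1 ≤ k) :
    (∀ i : ℕ, 1 ≤ i → i ≤ k + 1 → ∀ x y : ℝ, 0 < x → x < y →
      (∀ j : ℕ, 1 ≤ j → j < i → 0 ≤ Rbh k j x ∧ 0 ≤ Rbh k j y) →
      Rbh k i y < Rbh k i x) ∧
    (∀ i : ℕ, 1 ≤ i → i ≤ k + 1 → ∀ x y : ℝ, 0 < x → 0 < y →
      (∀ j : ℕ, 1 ≤ j → j < i → 0 ≤ Rbh k j x ∧ 0 ≤ Rbh k j y) →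
      Rbh k i x = 0 → Rbh k i y = 0 → x = y) := by
  refine ⟨Rbh_anti k hk, ?_⟩
  intro i hi1 hik x y hx hy hnn hrx hry
  rcases lt_trichotomy x y with h | h | h
  · have := Rbh_anti k hk i hi1 hik x y hx h hnn
    rw [hrx, hry] at this; exact absurd this (lt_irrefl 0)
  · exact h
  · have := Rbh_anti k hk i hi1 hik y x hy h
      (fun j h1 h2 => ⟨(hnn j h1 h2).2, (hnn j h1 h2).1⟩)
    rw [hrx, hry] at this; exact absurd this (lt_irrefl 0)
end
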